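/- Let H be an n×n matrix with entries in {+1,-1} and α a permutation of Fin n. For each permutation π let ε(π) = sgn(π) · ∏_{v} H(v, α(v)) · H(π(v), α(v)) ∈ {+1,-1}, and let A⁻ = #{π : ε(π) = -1}, A⁺ = #{π : ε(π) = +1}. If ∑_π ε(π) ≥ 0 then |det H| = n! - 2·A⁻ = 2·A⁺ - n!. -/

import Mathlib

theorem stmt_3 (n : ℕ) (H : Matrix (Fin n) (Fin n) ℤ)
    (hH : ∀ i j, H i j = 1 ∨ H i j = -1) (α : Equiv.Perm (Fin n))
    (ε : Equiv.Perm (Fin n) → ℤ)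
    (hε : ∀ π, ε π = (Equiv.Perm.sign π : ℤ) * ∏ v, H v (α v) * H (π v) (α v))
    (hpos : 0 ≤ ∑ π : Equiv.Perm (Fin n), ε π) :
    |Matrix.det H| =
        (n.factorial : ℤ) - 2 * (Finset.univ.filter (fun π => ε π = -1)).card ∧
    |Matrix.det H| =
        2 * (Finset.univ.filter (fun π => ε π = 1)).card - (n.factorial : ℤ) := by
  -- each ε π is ±1
  have hmul : ∀ a b : ℤ, (a = 1 ∨ a = -1) → (b = 1 ∨ b = -1) →
      (a * b = 1 ∨ a * b = -1) := by
    rintro a b (ha | ha) (hb | hb) <;> simp [ha, hb]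
  have hpm : ∀ π : Equiv.Perm (Fin n), ε π = 1 ∨ ε π = -1 := by
    intro π
    rw [hε]
    have hp : (∏ v, H v (α v) * H (π v) (α v)) = 1 ∨
        (∏ v, H v (α v) * H (π v) (α v)) = -1 := by
      refine Finset.prod_induction _ (fun x => x = 1 ∨ x = -1) (fun a b => hmul a b)
        (Or.inl rfl) (fun v _ => hmul _ _ (hH v (α v)) (hH (π v) (α v)))
    have hs : ((Equiv.Perm.sign π : ℤ) = 1 ∨ (Equiv.Perm.sign π : ℤ) = -1) := by
      rcases Int.units_eq_one_or (Equiv.Perm.sign π) with h | h <;> simp [h]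
    exact hmul _ _ hs hp
  -- sum of ε equals (∏ H v (α v)) * sign α * det H
  have hc : (∏ v, H v (α v)) = 1 ∨ (∏ v, H v (α v)) = -1 := by
    refine Finset.prod_induction _ (fun x => x = 1 ∨ x = -1) (fun a b => hmul a b)
      (Or.inl rfl) (fun v _ => hH v (α v))
  have hsum : ∑ π : Equiv.Perm (Fin n), ε π =
      (∏ v, H v (α v)) * ((Equiv.Perm.sign α : ℤ) * H.det) := by
    have hdp := Matrix.det_permute' α H
    push_cast at hdp
    rw [← hdp, Matrix.det_apply]
    rw [Finset.mul_sum]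
    refine Finset.sum_congr rfl fun π _ => ?_
    rw [hε]
    simp only [Matrix.submatrix_apply, id_eq, Units.smul_def, smul_eq_mul,
      Finset.prod_mul_distrib]
    ring
  -- |det H| = ∑ ε
  have habs : |H.det| = ∑ π : Equiv.Perm (Fin n), ε π := by
    have h1 : |∑ π : Equiv.Perm (Fin n), ε π| = |H.det| := by
      rw [hsum, abs_mul, abs_mul]
      rcases hc with h | h <;>
        rcases Int.units_eq_one_or (Equiv.Perm.sign α) with h2 | h2 <;>
        simp [h, h2]
    rw [← h1, abs_of_nonneg hpos]
  -- counting
  set B := (Finset.univ.filter (fun π : Equiv.Perm (Fin n) => ε π = 1)).card with hB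
  set A := (Finset.univ.filter (fun π : Equiv.Perm (Fin n) => ε π = -1)).card with hA
  have hfilt : Finset.univ.filter (fun π : Equiv.Perm (Fin n) => ¬ ε π = 1) =
      Finset.univ.filter (fun π : Equiv.Perm (Fin n) => ε π = -1) := by
    ext π
    simp only [Finset.mem_filter, Finset.mem_univ, true_and]
    rcases hpm π with h | h <;> simp [h]
  have hBA : (B : ℤ) + A = n.factorial := by
    have := Finset.card_filter_add_card_filter_not
      (s := (Finset.univ : Finset (Equiv.Perm (Fin n))))
      (p := fun π => ε π = 1)
    rw [hfilt] at this
    have hcard : (Finset.univ : Finset (Equiv.Perm (Fin n))).card = n.factorial := by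
      simp [Finset.card_univ, Fintype.card_perm]
    rw [hcard] at this
    exact_mod_cast this
  have hsum2 : ∑ π : Equiv.Perm (Fin n), ε π = (B : ℤ) - A := by
    rw [← Finset.sum_filter_add_sum_filter_not Finset.univ (fun π => ε π = 1) ε]
    rw [hfilt]
    rw [Finset.sum_congr rfl (fun π hπ => (Finset.mem_filter.mp hπ).2),
      Finset.sum_congr (M := ℤ) rfl (fun π hπ => (Finset.mem_filter.mp hπ).2)]
    simp [hB, hA, mul_comm, sub_eq_add_neg]
  rw [habs, hsum2]
  constructor <;> linarith
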